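/- arXiv:math/0308113 — 4 statements merged into one kernel-verified Lean document; each statement's English description precedes it below -/
import Mathlib

section
/- Let Γ be a pure (d−1)-dimensional shifted simplicial complex on [n]. For each 1 ≤ j ≤ n−d, the set Σ_j := {σ ∈ Σ_Γ : σ = A ∪ {d−|A|+j} with A ⊆ {d−|A|+j+1, …, n}} is nonempty. -/
/-!
Put `m = d + j`. The interval `{0, …, m-1}` has `m > d` vertices, so it is not a face, while
`{m-1}` is. Shrinking the interval from below, some `σ = {v, …, m-1}` is a non-face with
`σ \ {v}` a face. In a shifted complex this already makes `σ` a minimal non-face, because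
removing any other vertex of `σ` yields a shift of `σ \ {v}`. Its least vertex is `v` and
`v + |σ| = m = d + j`.
-/

open Finset

open scoped Classical

/-- A simplicial complex on the vertex set `V ⊆ Fin n`, given as its finite set of faces. -/
def IsComplexOn {n : ℕ} (V : Finset (Fin n)) (Γ : Finset (Finset (Fin n))) : Prop :=
  (∀ i ∈ V, ({i} : Finset (Fin n)) ∈ Γ) ∧ (∀ σ ∈ Γ, σ ⊆ V) ∧
    (∀ σ ∈ Γ, ∀ τ ⊆ σ, τ ∈ Γ)

/-- `σ` is a minimal non-face of `Γ`. -/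
def IsMinNonFace {n : ℕ} (Γ : Finset (Finset (Fin n))) (σ : Finset (Fin n)) : Prop :=
  σ ∉ Γ ∧ ∀ i ∈ σ, σ.erase i ∈ Γ

/-- `σ` is a facet (maximal face) of `Γ`. -/
def IsFacet {n : ℕ} (Γ : Finset (Finset (Fin n))) (σ : Finset (Fin n)) : Prop :=
  σ ∈ Γ ∧ ∀ τ ∈ Γ, σ ⊆ τ → τ = σ

/-- `Γ` has (simplicial) dimension `d - 1`. -/
def HasDim {n : ℕ} (Γ : Finset (Finset (Fin n))) (d : ℕ) : Prop :=
  (∀ σ ∈ Γ, σ.card ≤ d) ∧ (∃ σ ∈ Γ, σ.card = d)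

/-- `Γ` is pure of dimension `d - 1`: every facet has exactly `d` vertices. -/
def IsPureDim {n : ℕ} (Γ : Finset (Finset (Fin n))) (d : ℕ) : Prop :=
  HasDim Γ d ∧ ∀ σ, IsFacet Γ σ → σ.card = d

/-- `Γ` is shifted (vertices of `Fin n` ordered as `0 < 1 < ⋯ < n-1`, so the
vertex `v : Fin n` plays the role of `v+1 ∈ [n]` in the classical definition):
replacing a vertex of a face by any smaller vertex again yields a face. -/
def IsShifted {n : ℕ} (Γ : Finset (Finset (Fin n))) : Prop :=
  ∀ σ ∈ Γ, ∀ j ∈ σ, ∀ i : Fin n, i < j → insert i (σ.erase j) ∈ Γ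

/-- Membership in `Σ_j = {σ ∈ Σ_Γ : σ = A ∪ {d - |A| + j}, A ⊆ {d-|A|+j+1,…,n}}`
for a shifted complex: `σ` is a minimal non-face whose minimum vertex `v`
satisfies `v + |σ| = d + j` (0-indexed translation of `min σ = d - (|σ|-1) + j`,
with `A = σ \ {min σ}` consisting of strictly larger vertices). -/
def MemSigma {n : ℕ} (Γ : Finset (Finset (Fin n))) (d j : ℕ)
    (σ : Finset (Fin n)) : Prop :=
  IsMinNonFace Γ σ ∧ ∃ v ∈ σ, (∀ w ∈ σ, v ≤ w) ∧ (v : ℕ) + σ.card = d + j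

variable {n : ℕ}

def finIco (v m : ℕ) : Finset (Fin n) := {x | v ≤ (x : ℕ) ∧ (x : ℕ) < m}

lemma mem_finIco {v m : ℕ} {x : Fin n} : x ∈ finIco v m ↔ v ≤ (x : ℕ) ∧ (x : ℕ) < m := by
  simp [finIco]

lemma finIco_subset_finIco_left {v w m : ℕ} (h : v ≤ w) :
    (finIco w m : Finset (Fin n)) ⊆ finIco v m := fun x hx => by
  rw [mem_finIco] at hx ⊢
  omega

lemma card_finIco {v m : ℕ} (h : m ≤ n) : (finIco v m : Finset (Fin n)).card = m - v := by
  rw [← card_map Fin.valEmbedding, ← Nat.card_Ico]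
  congr 1
  ext x
  simp only [mem_map, mem_finIco, Fin.valEmbedding_apply, mem_Ico]
  exact ⟨fun ⟨y, hy, hyx⟩ => hyx ▸ hy, fun hx => ⟨⟨x, by omega⟩, hx, rfl⟩⟩

lemma finIco_pred_eq_singleton {m : ℕ} (h1 : 1 ≤ m) (h : m ≤ n) :
    (finIco (m - 1) m : Finset (Fin n)) = {⟨m - 1, by omega⟩} := by
  ext x
  simp only [mem_finIco, mem_singleton, Fin.ext_iff]
  omega

lemma erase_finIco {v m : ℕ} (hv : v < n) :
    (finIco v m).erase ⟨v, hv⟩ = finIco (v + 1) m := by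
  ext x
  simp only [mem_erase, mem_finIco, ne_eq, Fin.ext_iff]
  omega

lemma exists_finIco_notMem_and_succ_mem {Γ : Finset (Finset (Fin n))} {m : ℕ}
    (hdown : ∀ σ ∈ Γ, ∀ τ ⊆ σ, τ ∈ Γ) (h0 : finIco 0 m ∉ Γ) (htop : finIco (m - 1) m ∈ Γ) :
    ∃ v < m - 1, finIco v m ∉ Γ ∧ finIco (v + 1) m ∈ Γ := by
  obtain ⟨v, hv, hsucc⟩ := Nat.exists_not_and_succ_of_not_zero_of_exists
    (p := fun v => finIco v m ∈ Γ) h0 ⟨_, htop⟩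
  refine ⟨v, ?_, hv, hsucc⟩
  by_contra! hle
  exact hv (hdown _ htop _ (finIco_subset_finIco_left hle))

lemma IsShifted.isMinNonFace_of_erase_min {Γ : Finset (Finset (Fin n))} (hsh : IsShifted Γ)
    {σ : Finset (Fin n)} {v : Fin n} (hσ : σ ∉ Γ) (hv : v ∈ σ) (hmin : ∀ w ∈ σ, v ≤ w)
    (herase : σ.erase v ∈ Γ) : IsMinNonFace Γ σ := by
  refine ⟨hσ, fun i hi => ?_⟩
  rcases eq_or_ne i v with rfl | hiv
  · exact herase
  · -- `σ.erase i` is `σ.erase v` with `i` shifted down to `v`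
    have hshift := hsh _ herase i (mem_erase.2 ⟨hiv, hi⟩) v (lt_of_le_of_ne (hmin i hi) hiv.symm)
    rwa [erase_right_comm, insert_erase (mem_erase.2 ⟨hiv.symm, hv⟩)] at hshift

/-- For a pure `(d-1)`-dimensional shifted complex `Γ` on `[n]`
and each `1 ≤ j ≤ n - d`, the set `Σ_j` of minimal non-faces is nonempty. -/
theorem shifted_sigma_nonempty {n d : ℕ} (Γ : Finset (Finset (Fin n)))
    (hc : IsComplexOn Finset.univ Γ) (hsh : IsShifted Γ) (hp : IsPureDim Γ d)
    (j : ℕ) (hj1 : 1 ≤ j) (hj2 : j ≤ n - d) :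
    ∃ σ : Finset (Fin n), MemSigma Γ d j σ := by
  have hm : d + j ≤ n := by omega
  have h0 : finIco 0 (d + j) ∉ Γ := fun h => by
    have := hp.1.1 _ h
    rw [card_finIco hm] at this
    omega
  have htop : finIco (d + j - 1) (d + j) ∈ Γ := by
    rw [finIco_pred_eq_singleton (by omega) hm]
    exact hc.1 _ (mem_univ _)
  obtain ⟨v, hv, hnot, hsucc⟩ := exists_finIco_notMem_and_succ_mem hc.2.2 h0 htop
  have hvn : v < n := by omega
  have hmin : ∀ w ∈ finIco v (d + j), (⟨v, hvn⟩ : Fin n) ≤ w := fun w hw =>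
    Fin.le_def.2 (mem_finIco.1 hw).1
  have hmem : (⟨v, hvn⟩ : Fin n) ∈ finIco v (d + j) := mem_finIco.2 ⟨le_rfl, by simp only; omega⟩
  refine ⟨finIco v (d + j), ?_, ⟨v, hvn⟩, hmem, hmin, ?_⟩
  · exact hsh.isMinNonFace_of_erase_min hnot hmem hmin (by rwa [erase_finIco])
  · rw [card_finIco hm, Fin.val_mk]
    omega
end

section
/- Let Γ be a pure (d−1)-dimensional shifted complex on [n], with minimal non-face sets Σ_j as defined. The sets Σ_1, …, Σ_{n−d} are pairwise disjoint and their union is the set Σ_Γ of all minimal non-faces of Γ. -/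
/-!
The index `j` of a minimal non-face `σ` is forced by its minimum `v` through `v + |σ| = d + j`,
which gives disjointness. For the covering, `v + |σ| ≤ n` is immediate, and `v + |σ| > d` holds
for every vertex `v` of `σ`: otherwise extend `σ \ {v}` to a facet `F`, which has `d` vertices;
if `v ∉ F`, then `F \ (σ \ {v})` has more than `v` elements, so it contains some `w > v`, and
shifting `w` to `v` in `F` produces a face containing `σ`.
-/

open Finset

open scoped Classical

section

variable {n d : ℕ} {Γ : Finset (Finset (Fin n))} {σ : Finset (Fin n)}

lemma exists_isFacet_superset (hσ : σ ∈ Γ) : ∃ F, IsFacet Γ F ∧ σ ⊆ F := by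
  obtain ⟨F, hσF, hF, hFmax⟩ := Γ.exists_le_maximal hσ
  exact ⟨F, ⟨hF, fun τ hτ hFτ => (hFmax hτ hFτ).antisymm hFτ⟩, hσF⟩

lemma IsMinNonFace.nonempty (hempty : ∅ ∈ Γ) (hσ : IsMinNonFace Γ σ) : σ.Nonempty :=
  nonempty_iff_ne_empty.2 fun h => hσ.1 (h ▸ hempty)

lemma val_add_card_le_of_forall_le {v : Fin n} (hmin : ∀ w ∈ σ, v ≤ w) :
    (v : ℕ) + σ.card ≤ n := by
  have := card_le_card fun w hw => mem_Ici.2 (hmin w hw)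
  rw [Fin.card_Ici] at this
  have := v.isLt
  omega

lemma IsShifted.insert_mem_of_subset (hsh : IsShifted Γ) (hdown : ∀ σ ∈ Γ, ∀ τ ⊆ σ, τ ∈ Γ)
    {F τ : Finset (Fin n)} {v w : Fin n} (hF : F ∈ Γ) (hτF : τ ⊆ F) (hwF : w ∈ F) (hwτ : w ∉ τ)
    (hvw : v < w) : insert v τ ∈ Γ :=
  hdown _ (hsh F hF w hwF v hvw) _ (insert_subset_insert _ (subset_erase.2 ⟨hτF, hwτ⟩))

lemma IsMinNonFace.lt_val_add_card (hdown : ∀ σ ∈ Γ, ∀ τ ⊆ σ, τ ∈ Γ) (hsh : IsShifted Γ)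
    (hpure : ∀ F, IsFacet Γ F → F.card = d) (hσ : IsMinNonFace Γ σ) {v : Fin n} (hv : v ∈ σ) :
    d < v + σ.card := by
  by_contra! hle
  obtain ⟨F, hF, hτF⟩ := exists_isFacet_superset (hσ.2 v hv)
  apply hσ.1
  rw [← insert_erase hv]
  by_cases hvF : v ∈ F
  · exact hdown F hF.1 _ (insert_subset hvF hτF)
  obtain ⟨w, hw, hwv⟩ : ∃ w ∈ F \ σ.erase v, w ∉ Iio v := by
    apply exists_mem_notMem_of_card_lt_card
    rw [card_sdiff_of_subset hτF, hpure F hF, card_erase_of_mem hv, Fin.card_Iio]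
    have := card_pos.2 ⟨v, hv⟩
    omega
  obtain ⟨hwF, hwτ⟩ := mem_sdiff.1 hw
  have hvw : v < w := lt_of_le_of_ne (not_lt.1 (mt mem_Iio.2 hwv)) fun h => hvF (h ▸ hwF)
  exact hsh.insert_mem_of_subset hdown hF.1 hτF hwF hwτ hvw

lemma MemSigma.index_unique {j₁ j₂ : ℕ} (h₁ : MemSigma Γ d j₁ σ) (h₂ : MemSigma Γ d j₂ σ) :
    j₁ = j₂ := by
  obtain ⟨-, v₁, hv₁, hmin₁, he₁⟩ := h₁
  obtain ⟨-, v₂, hv₂, hmin₂, he₂⟩ := h₂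
  obtain rfl : v₁ = v₂ := le_antisymm (hmin₁ v₂ hv₂) (hmin₂ v₁ hv₁)
  omega

end

/-- For a pure `(d-1)`-dimensional shifted complex `Γ` on `[n]`,
the sets `Σ_1, …, Σ_{n-d}` are pairwise disjoint and their union is the set
`Σ_Γ` of all minimal non-faces of `Γ`. -/
theorem shifted_sigma_partition {n d : ℕ} (Γ : Finset (Finset (Fin n)))
    (hc : IsComplexOn Finset.univ Γ) (hsh : IsShifted Γ) (hp : IsPureDim Γ d) :
    (∀ j₁ j₂, 1 ≤ j₁ → j₁ ≤ n - d → 1 ≤ j₂ → j₂ ≤ n - d → j₁ ≠ j₂ →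
      ∀ σ : Finset (Fin n), ¬ (MemSigma Γ d j₁ σ ∧ MemSigma Γ d j₂ σ)) ∧
    (∀ σ : Finset (Fin n), IsMinNonFace Γ σ ↔
      ∃ j, 1 ≤ j ∧ j ≤ n - d ∧ MemSigma Γ d j σ) := by
  obtain ⟨-, -, hdown⟩ := hc
  obtain ⟨⟨-, σ₀, hσ₀, -⟩, hpure⟩ := hp
  refine ⟨fun j₁ j₂ _ _ _ _ hne σ h => hne (h.1.index_unique h.2),
    fun σ => ⟨fun hσ => ?_, fun ⟨_, _, _, h⟩ => h.1⟩⟩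
  have hne := hσ.nonempty (hdown σ₀ hσ₀ ∅ (empty_subset _))
  have hmin : ∀ w ∈ σ, σ.min' hne ≤ w := fun w hw => σ.min'_le w hw
  have hub := val_add_card_le_of_forall_le hmin
  have hlb := hσ.lt_val_add_card hdown hsh hpure (σ.min'_mem hne)
  exact ⟨σ.min' hne + σ.card - d, by omega, by omega, hσ, _, σ.min'_mem hne, hmin, by omega⟩
end

section
/- Let Γ be a pure (d−1)-dimensional shifted complex on [n] and let σ ≠ γ be two minimal non-faces both lying in Σ_j (for some 1 ≤ j ≤ n−d). Then there exist s > j and a minimal non-face τ ∈ Σ_s with τ ⊆ σ ∪ γ. -/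
open Finset

open scoped Classical

/-! Write `μ(τ) = min τ + |τ|`. In a shifted complex, a non-face `S` whose minimum cannot be
dropped is a minimal non-face (shift any other vertex down onto the minimum); otherwise drop
the minimum and recurse, which lowers `|S|` by one and raises `min S` by at least one. So every
non-face `S` contains a minimal non-face `τ` with `μ(τ) ≥ μ(S)`.

For `σ ≠ γ` in `Σ_j` with `v = min σ ≤ min γ`, pick `x ∈ γ \ σ`; then `x > v` and
`ρ = σ - v + x` is a non-face (shifting `x` back to `v` gives `σ`) with `μ(ρ) > μ(σ) = d + j`.
A minimal non-face `τ ⊆ ρ ⊆ σ ∪ γ` with `μ(τ) ≥ μ(ρ)` lies in `Σ_s` for `s = μ(τ) - d > j`. -/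


variable {n : ℕ} {Γ : Finset (Finset (Fin n))}

theorem IsMinNonFace.eq_of_subset (hdown : ∀ s ∈ Γ, ∀ t ⊆ s, t ∈ Γ) {σ γ : Finset (Fin n)}
    (hσ : IsMinNonFace Γ σ) (hγ : γ ∉ Γ) (hγσ : γ ⊆ σ) : γ = σ := by
  by_contra hne
  obtain ⟨y, hyσ, hyγ⟩ := exists_of_ssubset (lt_of_le_of_ne hγσ hne)
  exact hγ (hdown _ (hσ.2 y hyσ) γ (subset_erase.2 ⟨hγσ, hyγ⟩))

namespace IsShifted

theorem insert_erase_notMem (hsh : IsShifted Γ) {σ : Finset (Fin n)} (hσ : σ ∉ Γ)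
    {v x : Fin n} (hv : v ∈ σ) (hx : x ∉ σ) (hvx : v < x) : insert x (σ.erase v) ∉ Γ := by
  intro hρ
  have hx' : x ∉ σ.erase v := fun h => hx (mem_of_mem_erase h)
  have := hsh _ hρ x (mem_insert_self x _) v hvx
  rw [erase_insert hx', insert_erase hv] at this
  exact hσ this

theorem isMinNonFace_of_erase_min'_mem (hsh : IsShifted Γ) {S : Finset (Fin n)}
    (hne : S.Nonempty) (hS : S ∉ Γ) (hmin : S.erase (S.min' hne) ∈ Γ) : IsMinNonFace Γ S := by
  refine ⟨hS, fun y hy => ?_⟩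
  obtain hya | hya := eq_or_ne y (S.min' hne)
  · exact hya ▸ hmin
  have hy' : y ∈ S.erase (S.min' hne) := mem_erase.2 ⟨hya, hy⟩
  have := hsh _ hmin y hy' _ (min'_lt_of_mem_erase_min' S hne hy')
  rwa [erase_right_comm, insert_erase (mem_erase.2 ⟨hya.symm, S.min'_mem hne⟩)] at this

theorem exists_isMinNonFace_subset (hsh : IsShifted Γ) (hΓ : ∅ ∈ Γ) (S : Finset (Fin n))
    (hS : S ∉ Γ) : ∃ τ ⊆ S, IsMinNonFace Γ τ ∧ ∃ v ∈ τ, (∀ w ∈ τ, v ≤ w) ∧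
      ∀ u : ℕ, (∀ w ∈ S, u ≤ w) → u + #S ≤ v + #τ := by
  induction S using Finset.strongInduction with
  | H S ih =>
  have hne : S.Nonempty := nonempty_iff_ne_empty.2 (by rintro rfl; exact hS hΓ)
  have ha := S.min'_mem hne
  by_cases hmin : S.erase (S.min' hne) ∈ Γ
  · refine ⟨S, subset_rfl, hsh.isMinNonFace_of_erase_min'_mem hne hS hmin, _, ha,
      S.min'_le, fun u hu => ?_⟩
    have := hu _ ha
    omega
  obtain ⟨τ, hτ, hτmin, v, hv, hvτ, hμ⟩ := ih _ (erase_ssubset ha) hmin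
  refine ⟨τ, hτ.trans (erase_subset _ _), hτmin, v, hv, hvτ, fun u hu => ?_⟩
  have := hμ (u + 1) fun w hw =>
    (hu _ ha).trans_lt (Fin.lt_def.1 (min'_lt_of_mem_erase_min' S hne hw))
  rw [card_erase_of_mem ha] at this
  have := card_pos.2 hne
  omega

theorem exists_isMinNonFace_subset_union (hdown : ∀ s ∈ Γ, ∀ t ⊆ s, t ∈ Γ)
    (hsh : IsShifted Γ) {σ γ : Finset (Fin n)} (hσ : IsMinNonFace Γ σ) (hγ : γ ∉ Γ)
    (hne : σ ≠ γ) {v : Fin n} (hv : v ∈ σ) (hvσ : ∀ w ∈ σ, v ≤ w) (hvγ : ∀ w ∈ γ, v ≤ w) :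
    ∃ τ ⊆ σ ∪ γ, IsMinNonFace Γ τ ∧ ∃ u ∈ τ, (∀ w ∈ τ, u ≤ w) ∧ v + #σ < u + #τ := by
  obtain ⟨x, hxγ, hxσ⟩ := not_subset.1 fun h => hne (hσ.eq_of_subset hdown hγ h).symm
  have hvx : v < x := lt_of_le_of_ne (hvγ x hxγ) fun h => hxσ (h ▸ hv)
  have hΓ : ∅ ∈ Γ := hdown _ (hσ.2 v hv) ∅ (empty_subset _)
  obtain ⟨τ, hτ, hτmin, u, hu, huτ, hμ⟩ :=
    hsh.exists_isMinNonFace_subset hΓ _ (hsh.insert_erase_notMem hσ.1 hv hxσ hvx)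
  refine ⟨τ, hτ.trans (insert_subset (mem_union_right _ hxγ)
    ((erase_subset _ _).trans subset_union_left)), hτmin, u, hu, huτ, ?_⟩
  have := hμ (v + 1) fun w hw => by
    rcases mem_insert.1 hw with rfl | hw
    · exact hvx
    · exact lt_of_le_of_ne (hvσ w (mem_of_mem_erase hw)) (ne_of_mem_erase hw).symm
  rw [card_insert_of_notMem fun h => hxσ (mem_of_mem_erase h), card_erase_of_mem hv] at this
  have := card_pos.2 ⟨v, hv⟩
  omega

end IsShifted

theorem shifted_sigma_exchange_general {n d : ℕ} (Γ : Finset (Finset (Fin n)))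
    (hc : IsComplexOn Finset.univ Γ) (hsh : IsShifted Γ)
    (j : ℕ)
    (σ γ : Finset (Fin n)) (hσ : MemSigma Γ d j σ) (hγ : MemSigma Γ d j γ)
    (hne : σ ≠ γ) :
    ∃ s, j < s ∧ ∃ τ : Finset (Fin n), MemSigma Γ d s τ ∧ τ ⊆ σ ∪ γ := by
  obtain ⟨hσ, v, hv, hvσ, hvj⟩ := hσ
  obtain ⟨hγ, w, hw, hwγ, hwj⟩ := hγ
  suffices ∃ τ ⊆ σ ∪ γ, IsMinNonFace Γ τ ∧ ∃ u ∈ τ, (∀ x ∈ τ, u ≤ x) ∧ d + j < u + #τ by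
    obtain ⟨τ, hτ, hτmin, u, hu, huτ, hμ⟩ := this
    exact ⟨u + #τ - d, by omega, τ, ⟨hτmin, u, hu, huτ, by omega⟩, hτ⟩
  rcases le_total v w with h | h
  · exact hvj ▸ hsh.exists_isMinNonFace_subset_union hc.2.2 hσ hγ.1 hne hv hvσ
      fun x hx => h.trans (hwγ x hx)
  · rw [union_comm]
    exact hwj ▸ hsh.exists_isMinNonFace_subset_union hc.2.2 hγ hσ.1 hne.symm hw hwγ
      fun x hx => h.trans (hvσ x hx)

/-- Let `Γ` be a pure `(d-1)`-dimensional shifted complex on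
`[n]` and let `σ ≠ γ` be two minimal non-faces both in `Σ_j` (`1 ≤ j ≤ n - d`).
Then there are `s > j` and a minimal non-face `τ ∈ Σ_s` with `τ ⊆ σ ∪ γ`. -/
theorem shifted_sigma_exchange {n d : ℕ} (Γ : Finset (Finset (Fin n)))
    (hc : IsComplexOn Finset.univ Γ) (hsh : IsShifted Γ) (hp : IsPureDim Γ d)
    (j : ℕ) (hj1 : 1 ≤ j) (hj2 : j ≤ n - d)
    (σ γ : Finset (Fin n)) (hσ : MemSigma Γ d j σ) (hγ : MemSigma Γ d j γ)
    (hne : σ ≠ γ) :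
    ∃ s, j < s ∧ ∃ τ : Finset (Fin n), MemSigma Γ d s τ ∧ τ ⊆ σ ∪ γ :=
  shifted_sigma_exchange_general Γ hc hsh j σ γ hσ hγ hne
end

section
/- Let M be a generic monomial ideal whose Scarf complex has dimension equal to codim(M) − 1 and with dim V(M) = dim(S/M) − 1, i.e., dim(Δ_M) + dim(V(M)) = n − 2. Then every facet of the extended Scarf complex Δ_{M*} contains exactly codim(M) original generators of M and exactly dim(S/M) of the added pure powers x_i^D. -/
open Finset

open scoped Classical

set_option synthInstance.maxHeartbeats 1000000

/-- The monomial `x^a` in `k[x_1,…,x_n]` with exponent vector `a : Fin n → ℕ`. -/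
noncomputable def mono (k : Type*) [CommSemiring k] {n : ℕ} (a : Fin n → ℕ) :
    MvPolynomial (Fin n) k :=
  MvPolynomial.monomial (Finsupp.equivFunOnFinite.symm a) 1

/-- The monomial ideal generated by the monomials with exponent vectors in `G`. -/
noncomputable def monIdeal (k : Type*) [CommSemiring k] {n : ℕ}
    (G : Finset (Fin n → ℕ)) : Ideal (MvPolynomial (Fin n) k) :=
  Ideal.span ((fun a => mono k a) '' (G : Set (Fin n → ℕ)))

/-- Exponent vector of the lcm of the monomials with exponents in `σ`. -/
def lcmExp {n : ℕ} (σ : Finset (Fin n → ℕ)) : Fin n → ℕ :=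
  fun i => σ.sup (fun a => a i)

/-- `c` strictly divides `b`: whenever `c` has positive degree in a variable,
its degree there is strictly smaller than that of `b`. -/
def StrictlyDivides {n : ℕ} (c b : Fin n → ℕ) : Prop :=
  ∀ i, 0 < c i → c i < b i

/-- `G` is the set of exponent vectors of the minimal generators of a *generic*
monomial ideal: no generator divides another, and for any two distinct
generators with the same positive degree in some variable there is a third
generator strictly dividing their lcm. -/
def IsGeneric {n : ℕ} (G : Finset (Fin n → ℕ)) : Prop :=
  (∀ a ∈ G, ∀ b ∈ G, a ≤ b → a = b) ∧
  ∀ a ∈ G, ∀ b ∈ G, a ≠ b → (∃ h, a h = b h ∧ 0 < a h) →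
    ∃ c ∈ G, c ≠ a ∧ c ≠ b ∧ StrictlyDivides c (fun i => max (a i) (b i))

/-- `σ ⊆ G` is a face of the Scarf complex of the monomial ideal with minimal
generating exponents `G`: its lcm is attained by no other subset of `G`. -/
def ScarfFace {n : ℕ} (G σ : Finset (Fin n → ℕ)) : Prop :=
  σ ⊆ G ∧ ∀ τ ⊆ G, τ ≠ σ → lcmExp τ ≠ lcmExp σ

/-- The dimension (as an integer, so the empty-complex value `-1` is allowed)
of the Scarf complex `Δ_M`: one less than the largest cardinality of a face. -/
noncomputable def scarfDim {n : ℕ} (G : Finset (Fin n → ℕ)) : ℤ :=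
  (((G.powerset.filter (fun σ => ScarfFace G σ)).sup Finset.card : ℕ) : ℤ) - 1

/-- `σ` is a face of `V(M)`, the simplicial complex whose Stanley-Reisner ideal
is `rad M`: no generator of `M` has support contained in `σ`. -/
def VFace {n : ℕ} (G : Finset (Fin n → ℕ)) (σ : Finset (Fin n)) : Prop :=
  ∀ a ∈ G, ¬ (Finset.univ.filter (fun i => 0 < a i) ⊆ σ)

/-- The dimension of `V(M)` as an integer. -/
noncomputable def vDim {n : ℕ} (G : Finset (Fin n → ℕ)) : ℤ :=
  ((((Finset.univ : Finset (Fin n)).powerset.filter (fun σ => VFace G σ)).sup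
    Finset.card : ℕ) : ℤ) - 1

/-- The quotient `S/I` of the polynomial ring `S = k[x_1,…,x_n]` is
Cohen-Macaulay: some regular sequence on `S/I` consisting of elements of the
irrelevant maximal ideal `⟨x_1,…,x_n⟩` has length equal to the Krull dimension
of `S/I`. -/
def IsCMQuotient (k : Type*) [Field k] {n : ℕ}
    (I : Ideal (MvPolynomial (Fin n) k)) : Prop :=
  ∃ rs : List (MvPolynomial (Fin n) k),
    (∀ r ∈ rs, r ∈ Ideal.span (Set.range (MvPolynomial.X : Fin n → MvPolynomial (Fin n) k))) ∧
    RingTheory.Sequence.IsRegular (MvPolynomial (Fin n) k ⧸ I)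
      (rs.map (Ideal.Quotient.mk I)) ∧
    (rs.length : WithBot (WithTop ℕ)) = ringKrullDim (MvPolynomial (Fin n) k ⧸ I)

/-- The exponent vectors of the pure powers `x_1^D, …, x_n^D`. -/
noncomputable def purePowers (n D : ℕ) : Finset (Fin n → ℕ) :=
  Finset.univ.image (fun i : Fin n => fun j : Fin n => if j = i then D else 0)


/-! A facet `σ` of `Δ_{M*}` meets the generators of `M` in a face of `Δ_M` and the pure powers in
(a copy of) a face of `V(M)`, so it has at most `codim M + dim(S/M) = n` elements; it suffices
to show that it has at least `n`. A Scarf face `σ` with fewer than `n` elements has a variable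
`x_i` with `lcm(σ)_i < D` such that every element of `σ` attains `lcm σ` in some other variable
(else the elements attaining the lcm in a single variable would number `n`). Among the
generators of `M*` exceeding `lcm σ` only in `x_i` (for instance `x_i^D`), adjoin one of least
`x_i`-degree: genericity, which survives adjoining the pure powers, keeps the enlarged set a
Scarf face. -/

variable {n : ℕ}

/-- The genericity condition of `IsGeneric` without the minimality of the generators; unlike
`IsGeneric`, it survives adjoining the pure powers `x_i^D`. -/
def IsLcmGeneric (H : Finset (Fin n → ℕ)) : Prop :=
  ∀ a ∈ H, ∀ b ∈ H, a ≠ b → (∃ h, a h = b h ∧ 0 < a h) →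
    ∃ c ∈ H, c ≠ a ∧ c ≠ b ∧ StrictlyDivides c (fun i => max (a i) (b i))

lemma IsGeneric.isLcmGeneric {G : Finset (Fin n → ℕ)} (hG : IsGeneric G) : IsLcmGeneric G :=
  hG.2

lemma StrictlyDivides.le {c b : Fin n → ℕ} (h : StrictlyDivides c b) : c ≤ b := fun i =>
  (Nat.eq_zero_or_pos (c i)).elim (fun hc => hc ▸ Nat.zero_le _) fun hc => (h i hc).le

section Lcm

lemma lcmExp_eq_sup (σ : Finset (Fin n → ℕ)) : lcmExp σ = σ.sup id := by
  funext i
  simp [lcmExp, Finset.sup_apply]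

lemma le_lcmExp {σ : Finset (Fin n → ℕ)} {a : Fin n → ℕ} (ha : a ∈ σ) : a ≤ lcmExp σ := by
  rw [lcmExp_eq_sup]
  exact le_sup (f := id) ha

lemma lcmExp_insert (a : Fin n → ℕ) (σ : Finset (Fin n → ℕ)) :
    lcmExp (insert a σ) = a ⊔ lcmExp σ := by
  simp [lcmExp_eq_sup]

lemma lcmExp_union (σ τ : Finset (Fin n → ℕ)) : lcmExp (σ ∪ τ) = lcmExp σ ⊔ lcmExp τ := by
  simp [lcmExp_eq_sup, Finset.sup_union]

lemma exists_mem_apply_eq_lcmExp {σ : Finset (Fin n → ℕ)} {i : Fin n} (h : 0 < lcmExp σ i) :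
    ∃ a ∈ σ, a i = lcmExp σ i := by
  obtain ⟨a, ha, hsup⟩ := Finset.exists_mem_eq_sup σ (nonempty_of_ne_empty (by
    rintro rfl; simp [lcmExp] at h)) (fun a => a i)
  exact ⟨a, ha, hsup.symm⟩

end Lcm

namespace ScarfFace

variable {H σ : Finset (Fin n → ℕ)}

lemma mem_of_le (hσ : ScarfFace H σ) {c : Fin n → ℕ} (hc : c ∈ H) (hle : c ≤ lcmExp σ) :
    c ∈ σ := by
  by_contra hcσ
  exact hσ.2 (insert c σ) (insert_subset hc hσ.1) (fun h => hcσ (h ▸ mem_insert_self c σ))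
    (by rw [lcmExp_insert, sup_eq_right.2 hle])

lemma not_le_lcmExp_erase (hσ : ScarfFace H σ) {b : Fin n → ℕ} (hb : b ∈ σ) :
    ¬ b ≤ lcmExp (σ.erase b) := by
  intro hle
  refine hσ.2 (σ.erase b) ((erase_subset b σ).trans hσ.1)
    (fun h => notMem_erase b σ (h.symm ▸ hb)) ?_
  calc lcmExp (σ.erase b) = b ⊔ lcmExp (σ.erase b) := (sup_eq_right.2 hle).symm
    _ = lcmExp σ := by rw [← lcmExp_insert, insert_erase hb]

lemma exists_pos_apply_eq_lcmExp (hσ : ScarfFace H σ) {b : Fin n → ℕ} (hb : b ∈ σ) :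
    ∃ i, 0 < b i ∧ b i = lcmExp σ i := by
  by_contra! hno
  refine hσ.not_le_lcmExp_erase hb fun i => ?_
  rcases Nat.eq_zero_or_pos (b i) with hzero | hpos
  · simp [hzero]
  have hlt : b i < lcmExp σ i := lt_of_le_of_ne (le_lcmExp hb i) (hno i hpos)
  obtain ⟨a, ha, hai⟩ := exists_mem_apply_eq_lcmExp (hpos.trans hlt)
  have hab : a ≠ b := by rintro rfl; omega
  exact (hlt.trans_eq hai.symm).le.trans (le_lcmExp (mem_erase.2 ⟨hab, ha⟩) i)

/-- The genericity witness `c` for `a` and `b` would lie in `σ`, yet be redundant there. -/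
lemma eq_of_apply_eq (hgen : IsLcmGeneric H) (hσ : ScarfFace H σ) {a b : Fin n → ℕ}
    (ha : a ∈ σ) (hb : b ∈ σ) {i : Fin n} (hi : a i = b i) (hpos : 0 < a i) : a = b := by
  by_contra hab
  obtain ⟨c, hcH, hca, hcb, hdiv⟩ := hgen a (hσ.1 ha) b (hσ.1 hb) hab ⟨i, hi, hpos⟩
  have hcσ : c ∈ σ := hσ.mem_of_le hcH fun j =>
    (hdiv.le j).trans (max_le (le_lcmExp ha j) (le_lcmExp hb j))
  refine hσ.not_le_lcmExp_erase hcσ fun j => ?_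
  rcases Nat.eq_zero_or_pos (c j) with hzero | hcpos
  · simp [hzero]
  have hlt : c j < max (a j) (b j) := hdiv j hcpos
  rcases le_total (a j) (b j) with hle | hle
  · exact (hlt.trans_eq (max_eq_right hle)).le.trans
      (le_lcmExp (mem_erase.2 ⟨fun h => hcb h.symm, hb⟩) j)
  · exact (hlt.trans_eq (max_eq_left hle)).le.trans
      (le_lcmExp (mem_erase.2 ⟨fun h => hca h.symm, ha⟩) j)

/-- A competitor `τ ⊆ K` for `σ ∩ K` gives the competitor `τ ∪ (σ \ K)` for `σ`. -/
lemma inter (hσ : ScarfFace H σ) {K : Finset (Fin n → ℕ)} (hK : K ⊆ H) : ScarfFace K (σ ∩ K) := by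
  refine ⟨inter_subset_right, fun τ hτ hne hlcm => hne ?_⟩
  have hsplit : σ ∩ K ∪ σ \ K = σ := sup_inf_sdiff σ K
  have hunion : τ ∪ σ \ K = σ := by
    by_contra h
    refine hσ.2 _ (union_subset (hτ.trans hK) (sdiff_subset.trans hσ.1)) h ?_
    rw [lcmExp_union, hlcm, ← lcmExp_union, hsplit]
  ext x
  constructor
  · intro hx
    exact mem_inter.2 ⟨hunion ▸ mem_union_left _ hx, hτ hx⟩
  · intro hx
    obtain ⟨hxσ, hxK⟩ := mem_inter.1 hx
    rw [← hunion] at hxσ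
    exact (mem_union.1 hxσ).resolve_right fun h => (mem_sdiff.1 h).2 hxK

end ScarfFace

section Extension

variable {H σ : Finset (Fin n → ℕ)} {i : Fin n} {a : Fin n → ℕ}

def ExceedsOnlyAt (σ : Finset (Fin n → ℕ)) (i : Fin n) (x : Fin n → ℕ) : Prop :=
  (∀ j, j ≠ i → x j ≤ lcmExp σ j) ∧ lcmExp σ i < x i

lemma ExceedsOnlyAt.lcmExp_insert (ha : ExceedsOnlyAt σ i a) :
    lcmExp (insert a σ) = Function.update (lcmExp σ) i (a i) := by
  funext j
  rw [_root_.lcmExp_insert]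
  by_cases hj : j = i
  · subst hj
    simp [ha.2.le]
  · simp [hj, ha.1 j hj]

/-- The genericity witness `c` for `x` and `y` would either undercut the minimality of `a` or lie
in `σ` without attaining its lcm outside `x_i`. -/
lemma eq_of_le_of_apply_eq (hgen : IsLcmGeneric H) (hσ : ScarfFace H σ)
    (hpivot : ∀ c ∈ σ, ∃ j ≠ i, 0 < c j ∧ c j = lcmExp σ j)
    (hmin : ∀ x ∈ H, ExceedsOnlyAt σ i x → a i ≤ x i)
    {x y : Fin n → ℕ} (hx : x ∈ H) (hy : y ∈ H)
    (hxa : x ≤ Function.update (lcmExp σ) i (a i)) (hya : y ≤ Function.update (lcmExp σ) i (a i))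
    {k : Fin n} (hk : x k = y k) (hpos : 0 < x k) : x = y := by
  rw [le_update_iff] at hxa hya
  by_contra hxy
  obtain ⟨c, hcH, -, -, hdiv⟩ := hgen x hx y hy hxy ⟨k, hk, hpos⟩
  have hc_off : ∀ j, j ≠ i → 0 < c j → c j < lcmExp σ j := fun j hj hcj =>
    (hdiv j hcj).trans_le (max_le (hxa.2 j hj) (hya.2 j hj))
  have hc_le : ∀ j, j ≠ i → c j ≤ lcmExp σ j := fun j hj =>
    (hdiv.le j).trans (max_le (hxa.2 j hj) (hya.2 j hj))
  by_cases hci : lcmExp σ i < c i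
  · have hlt : c i < max (x i) (y i) := hdiv i (Nat.zero_le _ |>.trans_lt hci)
    have hac := hmin c hcH ⟨hc_le, hci⟩
    have := max_le hxa.1 hya.1
    omega
  · have hcσ : c ∈ σ := hσ.mem_of_le hcH fun j => by
      by_cases hj : j = i
      · rw [hj]; exact not_lt.1 hci
      · exact hc_le j hj
    obtain ⟨j, hj, hcj, hcm⟩ := hpivot c hcσ
    exact (hc_off j hj hcj).ne hcm

lemma eq_of_le_of_lcmExp_lt (hgen : IsLcmGeneric H) (hσ : ScarfFace H σ)
    (hpivot : ∀ c ∈ σ, ∃ j ≠ i, 0 < c j ∧ c j = lcmExp σ j) (ha : a ∈ H)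
    (haσ : ExceedsOnlyAt σ i a) (hmin : ∀ x ∈ H, ExceedsOnlyAt σ i x → a i ≤ x i)
    {x : Fin n → ℕ} (hx : x ∈ H) (hxa : x ≤ Function.update (lcmExp σ) i (a i))
    (hxi : lcmExp σ i < x i) : x = a := by
  have hxσ : ExceedsOnlyAt σ i x := ⟨(le_update_iff.1 hxa).2, hxi⟩
  refine eq_of_le_of_apply_eq hgen hσ hpivot hmin hx ha hxa
    (haσ.lcmExp_insert ▸ le_lcmExp (mem_insert_self a σ)) ?_ (Nat.zero_le _ |>.trans_lt hxi)
  exact le_antisymm (le_update_iff.1 hxa).1 (hmin x hx hxσ)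

lemma le_lcmExp_of_lcmExp_eq_insert (hgen : IsLcmGeneric H) (hσ : ScarfFace H σ)
    (hpivot : ∀ c ∈ σ, ∃ j ≠ i, 0 < c j ∧ c j = lcmExp σ j) (ha : a ∈ H)
    (haσ : ExceedsOnlyAt σ i a) (hmin : ∀ x ∈ H, ExceedsOnlyAt σ i x → a i ≤ x i)
    {τ : Finset (Fin n → ℕ)} (hτ : τ ⊆ H) (hlcm : lcmExp τ = lcmExp (insert a σ))
    {x : Fin n → ℕ} (hx : x ∈ τ) (hxa : x ≠ a) : x ≤ lcmExp σ := by
  have hx_le : x ≤ Function.update (lcmExp σ) i (a i) :=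
    haσ.lcmExp_insert ▸ hlcm ▸ le_lcmExp hx
  intro j
  by_cases hj : j = i
  · subst hj
    by_contra hlt
    exact hxa (eq_of_le_of_lcmExp_lt hgen hσ hpivot ha haσ hmin (hτ hx) hx_le (not_le.1 hlt))
  · simpa [hj] using hx_le j

lemma ScarfFace.insert_of_isMin (hgen : IsLcmGeneric H) (hσ : ScarfFace H σ)
    (hpivot : ∀ c ∈ σ, ∃ j ≠ i, 0 < c j ∧ c j = lcmExp σ j) (ha : a ∈ H)
    (haσ : ExceedsOnlyAt σ i a) (hmin : ∀ x ∈ H, ExceedsOnlyAt σ i x → a i ≤ x i) :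
    ScarfFace H (insert a σ) := by
  refine ⟨insert_subset ha hσ.1, fun τ hτ hne hlcm => hne ?_⟩
  have hτ_sub : ∀ x ∈ τ, x ≠ a → x ∈ σ := fun x hx hxa => hσ.mem_of_le (hτ hx)
    (le_lcmExp_of_lcmExp_eq_insert hgen hσ hpivot ha haσ hmin hτ hlcm hx hxa)
  rw [haσ.lcmExp_insert] at hlcm
  have haτ : a ∈ τ := by
    obtain ⟨x, hxτ, hxi⟩ := exists_mem_apply_eq_lcmExp (σ := τ)
      (i := i) (by simpa [hlcm] using Nat.zero_le _ |>.trans_lt haσ.2)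
    have hxi : x i = a i := by simpa [hlcm] using hxi
    by_contra haτ
    have hxσ := le_lcmExp (hτ_sub x hxτ fun h => haτ (h ▸ hxτ)) i
    exact absurd haσ.2 (not_lt.2 (hxi ▸ hxσ))
  have hσ_sub : σ ⊆ τ := by
    intro b hb
    obtain ⟨j, hj, hbj, hbm⟩ := hpivot b hb
    obtain ⟨x, hxτ, hxj⟩ := exists_mem_apply_eq_lcmExp (σ := τ)
      (i := j) (by simpa [hlcm, hj, ← hbm] using hbj)
    have hxj : x j = b j := by simpa [hlcm, hj, ← hbm] using hxj
    by_cases hxa : x = a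
    · subst hxa
      have hb_le : b ≤ Function.update (lcmExp σ) i (x i) :=
        (le_lcmExp hb).trans (le_update_iff.2 ⟨haσ.2.le, fun _ _ => le_rfl⟩)
      obtain rfl := eq_of_le_of_apply_eq hgen hσ hpivot hmin ha (hσ.1 hb)
        (hlcm ▸ le_lcmExp hxτ) hb_le hxj (hxj ▸ hbj)
      exact absurd (le_lcmExp hb i) (not_le.2 haσ.2)
    · exact hσ.eq_of_apply_eq hgen (hτ_sub x hxτ hxa) hb hxj (hxj ▸ hbj) ▸ hxτ
  refine Subset.antisymm (fun x hx => ?_) (insert_subset haτ hσ_sub)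
  by_cases hxa : x = a
  · exact hxa ▸ mem_insert_self a σ
  · exact mem_insert_of_mem (hτ_sub x hx hxa)

end Extension

section PurePowers

variable {D : ℕ}

lemma mem_purePowers {a : Fin n → ℕ} : a ∈ purePowers n D ↔ ∃ i, Pi.single i D = a := by
  simp only [purePowers, mem_image, mem_univ, true_and]
  exact exists_congr fun i => by rw [funext_iff, funext_iff]; simp [Pi.single_apply]

lemma single_mem_purePowers (i : Fin n) : Pi.single i D ∈ purePowers n D :=
  mem_purePowers.2 ⟨i, rfl⟩

lemma eq_single_of_mem_purePowers {a : Fin n → ℕ} (ha : a ∈ purePowers n D) {k : Fin n}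
    (hpos : 0 < a k) : a = Pi.single k D := by
  obtain ⟨i, rfl⟩ := mem_purePowers.1 ha
  by_cases h : k = i
  · rw [h]
  · simp [h] at hpos

variable {G : Finset (Fin n → ℕ)}

lemma disjoint_purePowers (hD : ∀ a ∈ G, ∀ i, a i < D) : Disjoint G (purePowers n D) := by
  refine disjoint_left.2 fun a haG haP => ?_
  obtain ⟨i, rfl⟩ := mem_purePowers.1 haP
  simpa using hD _ haG i

lemma isLcmGeneric_union_purePowers (hgen : IsLcmGeneric G) (hD : ∀ a ∈ G, ∀ i, a i < D) :
    IsLcmGeneric (G ∪ purePowers n D) := by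
  rintro a ha b hb hab ⟨k, hk, hpos⟩
  rcases mem_union.1 ha with haG | haP <;> rcases mem_union.1 hb with hbG | hbP
  · obtain ⟨c, hc, hca, hcb, hdiv⟩ := hgen a haG b hbG hab ⟨k, hk, hpos⟩
    exact ⟨c, mem_union_left _ hc, hca, hcb, hdiv⟩
  · have := hD a haG k
    rw [hk, eq_single_of_mem_purePowers hbP (hk ▸ hpos)] at this
    simp at this
  · have := hD b hbG k
    rw [← hk, eq_single_of_mem_purePowers haP hpos] at this
    simp at this
  · exact absurd ((eq_single_of_mem_purePowers haP hpos).trans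
      (eq_single_of_mem_purePowers hbP (hk ▸ hpos)).symm) hab

end PurePowers

lemma ScarfFace.card_le_scarfDim {G τ : Finset (Fin n → ℕ)} (h : ScarfFace G τ) :
    (τ.card : ℤ) - 1 ≤ scarfDim G :=
  sub_le_sub_right (Nat.cast_le.2 (le_sup (f := card) (mem_filter.2 ⟨mem_powerset.2 h.1, h⟩))) 1

lemma VFace.card_le_vDim {G : Finset (Fin n → ℕ)} {s : Finset (Fin n)} (h : VFace G s) :
    (s.card : ℤ) - 1 ≤ vDim G :=
  sub_le_sub_right (Nat.cast_le.2 (le_sup (f := card)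
    (mem_filter.2 ⟨mem_powerset.2 (subset_univ s), h⟩))) 1

section ExtendedScarf

variable {G σ : Finset (Fin n → ℕ)} {D : ℕ}

/-- If no such variable `x_i` existed, each variable would be owned by an element of `σ` attaining
the lcm there and nowhere else (the pure power `x_i^D` when the lcm reaches `D`), forcing
`n ≤ #σ`. -/
lemma ScarfFace.exists_pivot (hD : ∀ a ∈ G, ∀ i, a i < D) (hD0 : 0 < D)
    (hσ : ScarfFace (G ∪ purePowers n D) σ) (hcard : σ.card < n) :
    ∃ i, lcmExp σ i < D ∧ ∀ c ∈ σ, ∃ j ≠ i, 0 < c j ∧ c j = lcmExp σ j := by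
  by_contra! hno
  have howner : ∀ i, ∃ c ∈ σ, ∀ j, (0 < c j ∧ c j = lcmExp σ j) ↔ j = i := by
    intro i
    rcases lt_or_ge (lcmExp σ i) D with hlt | hge
    · obtain ⟨c, hc, hcj⟩ := hno i hlt
      refine ⟨c, hc, fun j => ⟨fun hj => by_contra fun hji => hcj j hji hj.1 hj.2, ?_⟩⟩
      rintro rfl
      obtain ⟨k, hkpos, hkeq⟩ := hσ.exists_pos_apply_eq_lcmExp hc
      by_cases hki : k = j
      · exact hki ▸ ⟨hkpos, hkeq⟩
      · exact absurd hkeq (hcj k hki hkpos)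
    · obtain ⟨x, hxσ, hxi⟩ := exists_mem_apply_eq_lcmExp (hD0.trans_le hge)
      have hxG : x ∉ G := fun hxG => (hD x hxG i).not_ge (hxi ▸ hge)
      have hxP := (mem_union.1 (hσ.1 hxσ)).resolve_left hxG
      obtain rfl := eq_single_of_mem_purePowers hxP (hxi ▸ hD0.trans_le hge)
      refine ⟨_, hxσ, fun j => ⟨fun hj => by_contra fun hji => ?_, ?_⟩⟩
      · simp [hji] at hj
      · rintro rfl
        exact ⟨by simpa using hD0, hxi⟩
  choose φ hφσ hφ using howner
  have hinj : Function.Injective φ := fun i i' h =>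
    ((hφ i i').1 (h ▸ (hφ i' i').2 rfl)).symm
  have hle := card_le_card_of_injOn φ (s := univ) (fun i _ => hφσ i) hinj.injOn
  simp only [card_univ, Fintype.card_fin] at hle
  omega

lemma ScarfFace.exists_insert (hgen : IsLcmGeneric G) (hD : ∀ a ∈ G, ∀ i, a i < D)
    (hD0 : 0 < D) (hσ : ScarfFace (G ∪ purePowers n D) σ) (hcard : σ.card < n) :
    ∃ a ∉ σ, ScarfFace (G ∪ purePowers n D) (insert a σ) := by
  obtain ⟨i, hiD, hpivot⟩ := hσ.exists_pivot hD hD0 hcard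
  have hF : ((G ∪ purePowers n D).filter (ExceedsOnlyAt σ i)).Nonempty :=
    ⟨Pi.single i D, mem_filter.2 ⟨mem_union_right _ (single_mem_purePowers i),
      fun j hj => by simp [hj], by simpa using hiD⟩⟩
  obtain ⟨a, haF, hmin⟩ := exists_min_image _ (fun x => x i) hF
  obtain ⟨ha, haσ⟩ := mem_filter.1 haF
  exact ⟨a, fun h => (le_lcmExp h i).not_gt haσ.2,
    hσ.insert_of_isMin (isLcmGeneric_union_purePowers hgen hD) hpivot ha haσ
      fun x hx hxσ => hmin x (mem_filter.2 ⟨hx, hxσ⟩)⟩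

lemma ScarfFace.le_card_of_maximal (hgen : IsLcmGeneric G) (hD : ∀ a ∈ G, ∀ i, a i < D)
    (hD0 : 0 < D) (hσ : ScarfFace (G ∪ purePowers n D) σ)
    (hmax : ∀ τ, ScarfFace (G ∪ purePowers n D) τ → σ ⊆ τ → τ = σ) : n ≤ σ.card := by
  by_contra! hcard
  obtain ⟨a, haσ, hface⟩ := hσ.exists_insert hgen hD hD0 hcard
  exact haσ (hmax _ hface (subset_insert a σ) ▸ mem_insert_self a σ)

/-- A generator `a` whose support only meets pure powers in `σ` lies below their lcm, so it would
be redundant in `σ` or could be added to it. -/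
lemma ScarfFace.vFace_filter_single_mem (hD : ∀ a ∈ G, ∀ i, a i < D)
    (hσ : ScarfFace (G ∪ purePowers n D) σ) :
    VFace G (univ.filter fun i => Pi.single i D ∈ σ) := by
  intro a haG hsupp
  have hsingle : ∀ j, 0 < a j → Pi.single j D ∈ σ := fun j hj =>
    (mem_filter.1 (hsupp (mem_filter.2 ⟨mem_univ j, hj⟩))).2
  have hle : ∀ τ : Finset (Fin n → ℕ), (∀ j, 0 < a j → Pi.single j D ∈ τ) →
      a ≤ lcmExp τ := fun τ hτ j => by
    rcases Nat.eq_zero_or_pos (a j) with hzero | hpos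
    · simp [hzero]
    · have hDτ := le_lcmExp (hτ j hpos) j
      rw [Pi.single_eq_same] at hDτ
      exact (hD a haG j).le.trans hDτ
  by_cases haσ : a ∈ σ
  · refine hσ.not_le_lcmExp_erase haσ (hle _ fun j hj => mem_erase.2 ⟨fun h => ?_, hsingle j hj⟩)
    simpa [← h] using hD a haG j
  · exact haσ (hσ.mem_of_le (mem_union_left _ haG) (hle σ hsingle))

lemma card_inter_purePowers_le :
    (σ ∩ purePowers n D).card ≤ (univ.filter fun i => Pi.single i D ∈ σ).card := by
  calc (σ ∩ purePowers n D).card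
      ≤ ((univ.filter fun i => Pi.single i D ∈ σ).image fun i => Pi.single i D).card := by
        refine card_le_card fun x hx => ?_
        obtain ⟨hxσ, hxP⟩ := mem_inter.1 hx
        obtain ⟨i, rfl⟩ := mem_purePowers.1 hxP
        exact mem_image_of_mem _ (mem_filter.2 ⟨mem_univ i, hxσ⟩)
    _ ≤ _ := card_image_le

end ExtendedScarf

theorem extended_scarf_facets_general {n : ℕ}
    (G : Finset (Fin n → ℕ)) (hG : G.Nonempty)
    (hgen : IsGeneric G) (D : ℕ) (hD : ∀ a ∈ G, ∀ i, a i < D)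
    (c dd : ℕ) (hcodim : c + dd = n)
    (hscarf : scarfDim G = (c : ℤ) - 1) (hv : vDim G = (dd : ℤ) - 1) :
    ∀ σ : Finset (Fin n → ℕ), ScarfFace (G ∪ purePowers n D) σ →
      (∀ τ, ScarfFace (G ∪ purePowers n D) τ → σ ⊆ τ → τ = σ) →
      (σ ∩ G).card = c ∧ (σ ∩ purePowers n D).card = dd := by
  intro σ hσ hmax
  have hG_le : ((σ ∩ G).card : ℤ) - 1 ≤ scarfDim G :=
    (hσ.inter subset_union_left).card_le_scarfDim
  have hP_le : ((univ.filter fun i => Pi.single i D ∈ σ).card : ℤ) - 1 ≤ vDim G :=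
    (hσ.vFace_filter_single_mem hD).card_le_vDim
  have hP_card := card_inter_purePowers_le (σ := σ) (D := D)
  have hsplit : (σ ∩ G).card + (σ ∩ purePowers n D).card = σ.card := by
    rw [← card_union_of_disjoint ((disjoint_purePowers hD).mono inter_subset_right
      inter_subset_right), ← inter_union_distrib_left, inter_eq_left.2 hσ.1]
  have hn : n ≤ σ.card := by
    rcases Nat.eq_zero_or_pos n with rfl | hn
    · exact Nat.zero_le _
    obtain ⟨a, ha⟩ := hG
    exact hσ.le_card_of_maximal hgen.isLcmGeneric hD ((Nat.zero_le _).trans_lt (hD a ha ⟨0, hn⟩))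
      hmax
  omega

/-- Let `M` be a generic monomial ideal with
`dim Δ_M = codim M - 1` and `dim V(M) = dim(S/M) - 1` (so
`dim Δ_M + dim V(M) = n - 2`).  Then every facet of the extended Scarf complex
`Δ_{M*}` (where `M* = M + ⟨x_1^D,…,x_n^D⟩`, `D` larger than every exponent of a
generator) contains exactly `codim M` original generators of `M` and exactly
`dim(S/M)` of the pure powers `x_i^D`. -/
theorem extended_scarf_facets (k : Type*) [Field k] {n : ℕ}
    (G : Finset (Fin n → ℕ)) (hG : G.Nonempty) (h0 : ∀ a ∈ G, a ≠ 0)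
    (hgen : IsGeneric G) (D : ℕ) (hD : ∀ a ∈ G, ∀ i, a i < D)
    (c dd : ℕ) (hcodim : c + dd = n)
    (hdd : ringKrullDim (MvPolynomial (Fin n) k ⧸ monIdeal k G)
      = (dd : WithBot (WithTop ℕ)))
    (hscarf : scarfDim G = (c : ℤ) - 1) (hv : vDim G = (dd : ℤ) - 1) :
    ∀ σ : Finset (Fin n → ℕ), ScarfFace (G ∪ purePowers n D) σ →
      (∀ τ, ScarfFace (G ∪ purePowers n D) τ → σ ⊆ τ → τ = σ) →
      (σ ∩ G).card = c ∧ (σ ∩ purePowers n D).card = dd :=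
  extended_scarf_facets_general G hG hgen D hD c dd hcodim hscarf hv
end
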